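/- For C ≥ 2, let g be defined on D = {p̃ ∈ ℝ^{C−1} : p̃_i > 0 for all i and Σ_{k=1}^{C−1} p̃_k < 1} by g(p̃)_i = log(p̃_i / (1 − Σ_{k=1}^{C−1} p̃_k)). Then g is smooth, and for every p̃ ∈ D its Jacobian equals J_g(p̃) = diag(1/p̃_1, …, 1/p̃_{C−1}) + (1 / (1 − Σ_{k=1}^{C−1} p̃_k)) · 1_{C−1} 1_{C−1}^T, which is symmetric and positive definite; consequently g is strictly monotone on D, i.e., ⟨g(p̃) − g(q̃), p̃ − q̃⟩ > 0 for all distinct p̃, q̃ ∈ D. -/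

import Mathlib

noncomputable section

/-- The interior `D` of the projected probability simplex `Δ̃^{C-1} ⊆ ℝ^{C-1}`. -/
def projInterior (d : ℕ) : Set (Fin d → ℝ) :=
  {p | (∀ i, 0 < p i) ∧ ∑ i, p i < 1}

/-- The map `g(p)_i = log (p i / (1 - ∑ k, p k))`, defined on `D`. -/
def invSoftmaxPlus (d : ℕ) (p : Fin d → ℝ) : Fin d → ℝ :=
  fun i => Real.log (p i / (1 - ∑ k, p k))

end

open ContinuousLinearMap in
lemma isOpen_projInterior (d : ℕ) : IsOpen (projInterior d) := by
  have h1 : IsOpen {p : Fin d → ℝ | ∀ i, 0 < p i} := by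
    have : {p : Fin d → ℝ | ∀ i, 0 < p i} = ⋂ i, (fun p : Fin d → ℝ => p i) ⁻¹' Set.Ioi 0 := by
      ext p; simp [Set.mem_iInter]
    rw [this]
    exact isOpen_iInter_of_finite fun i => (continuous_apply i).isOpen_preimage _ isOpen_Ioi
  have h2 : IsOpen {p : Fin d → ℝ | ∑ i, p i < 1} := by
    have : Continuous fun p : Fin d → ℝ => ∑ i, p i :=
      continuous_finset_sum _ fun i _ => continuous_apply i
    exact this.isOpen_preimage _ isOpen_Iio
  exact h1.inter h2

noncomputable def smSum (d : ℕ) : (Fin d → ℝ) →L[ℝ] ℝ :=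
  ∑ k, ContinuousLinearMap.proj k

noncomputable def smDeriv (d : ℕ) (p : Fin d → ℝ) : (Fin d → ℝ) →L[ℝ] (Fin d → ℝ) :=
  ContinuousLinearMap.pi fun i =>
    (p i)⁻¹ • ContinuousLinearMap.proj i + (1 - ∑ k, p k)⁻¹ • smSum d

lemma hasFDerivAt_ism (d : ℕ) (p : Fin d → ℝ) (hp : p ∈ projInterior d) :
    HasFDerivAt (invSoftmaxPlus d) (smDeriv d p) p := by
  obtain ⟨hpos, hsum⟩ := hp
  have hs : 0 < 1 - ∑ k, p k := by linarith
  have hf : HasFDerivAt (fun q : Fin d → ℝ => fun i => Real.log (q i) - Real.log (1 - ∑ k, q k))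
      (smDeriv d p) p := by
    apply hasFDerivAt_pi''
    intro i
    have h1 : HasFDerivAt (fun q : Fin d → ℝ => Real.log (q i))
        ((p i)⁻¹ • (ContinuousLinearMap.proj i : (Fin d → ℝ) →L[ℝ] ℝ)) p := by
      have := (Real.hasDerivAt_log (hpos i).ne').comp_hasFDerivAt p
        (ContinuousLinearMap.proj i : (Fin d → ℝ) →L[ℝ] ℝ).hasFDerivAt
      simpa [Function.comp_def] using this
    have hS : HasFDerivAt (fun q : Fin d → ℝ => 1 - ∑ k, q k) (-smSum d) p := by
      have : HasFDerivAt (fun q : Fin d → ℝ => ∑ k, q k) (smSum d) p :=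
        HasFDerivAt.fun_sum fun k _ => (ContinuousLinearMap.proj k : (Fin d → ℝ) →L[ℝ] ℝ).hasFDerivAt
      simpa using (hasFDerivAt_const (1:ℝ) p).fun_sub this
    have h2 : HasFDerivAt (fun q : Fin d → ℝ => Real.log (1 - ∑ k, q k))
        ((1 - ∑ k, p k)⁻¹ • (-smSum d)) p := by
      have := (Real.hasDerivAt_log hs.ne').comp_hasFDerivAt p hS
      simpa [Function.comp_def] using this
    have := h1.fun_sub h2
    convert this using 1
    ext v
    simp [smDeriv, smSum, smul_smul]
  apply hf.congr_of_eventuallyEq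
  filter_upwards [(isOpen_projInterior d).mem_nhds ⟨hpos, hsum⟩] with q hq
  obtain ⟨hq1, hq2⟩ := hq
  funext i
  rw [invSoftmaxPlus, Real.log_div (hq1 i).ne' (by linarith : (0:ℝ) < 1 - ∑ k, q k).ne']

example : True := trivial

lemma log_sub_mul_nonneg {x y : ℝ} (hx : 0 < x) (hy : 0 < y) :
    0 ≤ (Real.log x - Real.log y) * (x - y) := by
  rcases lt_trichotomy x y with h | h | h
  · have := Real.log_lt_log hx h
    nlinarith
  · simp [h]
  · have := Real.log_lt_log hy h
    nlinarith

lemma log_sub_mul_pos {x y : ℝ} (hx : 0 < x) (hy : 0 < y) (hne : x ≠ y) :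
    0 < (Real.log x - Real.log y) * (x - y) := by
  rcases lt_trichotomy x y with h | h | h
  · have := Real.log_lt_log hx h
    nlinarith
  · exact absurd h hne
  · have := Real.log_lt_log hy h
    nlinarith


/-- `g` is smooth on `D`, its Jacobian there is
`J_g(p) = diag (1/p₁, …, 1/p_{C-1}) + (1 / (1 - ∑ k, p k)) 1 1ᵀ`, which is symmetric and
positive definite; consequently `g` is strictly monotone on `D`. -/
theorem stmt_15 (d : ℕ) (hd : 1 ≤ d) :
    ContDiffOn ℝ (⊤ : ℕ∞) (invSoftmaxPlus d) (projInterior d) ∧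
    (∀ p ∈ projInterior d,
      (∀ i j : Fin d,
        fderiv ℝ (invSoftmaxPlus d) p (Pi.single j 1) i
          = (if i = j then 1 / p i else 0) + 1 / (1 - ∑ k, p k)) ∧
      (∀ i j : Fin d,
        fderiv ℝ (invSoftmaxPlus d) p (Pi.single j 1) i
          = fderiv ℝ (invSoftmaxPlus d) p (Pi.single i 1) j) ∧
      (∀ z : Fin d → ℝ, z ≠ 0 →
        0 < ∑ i, ∑ j, z i * ((if i = j then 1 / p i else 0) + 1 / (1 - ∑ k, p k)) * z j)) ∧
    (∀ p ∈ projInterior d, ∀ q ∈ projInterior d, p ≠ q →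
      0 < ∑ i, (invSoftmaxPlus d p i - invSoftmaxPlus d q i) * (p i - q i)) := by
  have hpos : ∀ p ∈ projInterior d, (0:ℝ) < 1 - ∑ k, p k := by
    rintro p ⟨_, h⟩; linarith
  refine ⟨?_, ?_, ?_⟩
  · -- smoothness
    rw [contDiffOn_pi]
    intro i
    apply ContDiffOn.log
    · apply ContDiffOn.div
      · exact (ContinuousLinearMap.proj i : (Fin d → ℝ) →L[ℝ] ℝ).contDiff.contDiffOn
      · exact (contDiff_const.sub (ContDiff.sum fun k _ =>
          (ContinuousLinearMap.proj k : (Fin d → ℝ) →L[ℝ] ℝ).contDiff)).contDiffOn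
      · intro p hp; exact (hpos p hp).ne'
    · intro p hp
      exact (div_pos (hp.1 i) (hpos p hp)).ne'
  · intro p hp
    have hfd := (hasFDerivAt_ism d p hp).fderiv
    have key : ∀ i j : Fin d,
        fderiv ℝ (invSoftmaxPlus d) p (Pi.single j 1) i
          = (if i = j then 1 / p i else 0) + 1 / (1 - ∑ k, p k) := by
      intro i j
      rw [hfd]
      simp [smDeriv, smSum, Finset.sum_pi_single', Pi.single_apply, one_div]
    refine ⟨key, ?_, ?_⟩
    · intro i j
      rw [key i j, key j i]
      by_cases h : i = j <;> simp [h, eq_comm]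
    · intro z hz
      set c := 1 / (1 - ∑ k, p k) with hc
      have hcpos : 0 < c := by
        have := hpos p hp; rw [hc]; positivity
      have expand : ∀ i : Fin d,
          ∑ j, z i * ((if i = j then 1 / p i else 0) + c) * z j
            = z i * z i / p i + c * (z i * ∑ j, z j) := by
        intro i
        rw [Finset.mul_sum]
        have : ∀ j : Fin d, z i * ((if i = j then 1 / p i else 0) + c) * z j
            = (if i = j then z i * z j / p i else 0) + c * (z i * z j) := by
          intro j; split <;> ring
        rw [Finset.sum_congr rfl fun j _ => this j]
        rw [Finset.sum_add_distrib, Finset.sum_ite_eq (Finset.univ) i (fun j => z i * z j / p i)]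
        simp [Finset.mul_sum]
      rw [Finset.sum_congr rfl fun i _ => expand i, Finset.sum_add_distrib]
      have h1 : 0 < ∑ i, z i * z i / p i := by
        obtain ⟨i0, hi0⟩ : ∃ i, z i ≠ 0 := by
          by_contra h; push_neg at h; exact hz (funext h)
        apply Finset.sum_pos' (fun i _ => div_nonneg (mul_self_nonneg _) (hp.1 i).le)
        exact ⟨i0, Finset.mem_univ i0,
          div_pos (mul_self_pos.mpr hi0) (hp.1 i0)⟩
      have h2 : 0 ≤ ∑ i, c * (z i * ∑ j, z j) := by
        rw [← Finset.mul_sum, ← Finset.sum_mul]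
        have : (0:ℝ) ≤ (∑ i, z i) * (∑ j, z j) := mul_self_nonneg _
        positivity
      linarith
  · intro p hp q hq hne
    have hap := hpos p hp
    have haq := hpos q hq
    have expand : ∀ i : Fin d,
        (invSoftmaxPlus d p i - invSoftmaxPlus d q i) * (p i - q i)
          = (Real.log (p i) - Real.log (q i)) * (p i - q i)
            + (Real.log (1 - ∑ k, q k) - Real.log (1 - ∑ k, p k)) * (p i - q i) := by
      intro i
      rw [invSoftmaxPlus, invSoftmaxPlus, Real.log_div (hp.1 i).ne' hap.ne',
        Real.log_div (hq.1 i).ne' haq.ne']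
      ring
    rw [Finset.sum_congr rfl fun i _ => expand i, Finset.sum_add_distrib]
    have h2 : 0 ≤ ∑ i, (Real.log (1 - ∑ k, q k) - Real.log (1 - ∑ k, p k)) * (p i - q i) := by
      rw [← Finset.mul_sum]
      have hsum : ∑ i, (p i - q i) = (1 - ∑ k, q k) - (1 - ∑ k, p k) := by
        rw [Finset.sum_sub_distrib]; ring
      rw [hsum]
      exact log_sub_mul_nonneg haq hap
    have h1 : 0 < ∑ i, (Real.log (p i) - Real.log (q i)) * (p i - q i) := by
      obtain ⟨i0, hi0⟩ : ∃ i, p i ≠ q i := by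
        by_contra h; push_neg at h; exact hne (funext h)
      apply Finset.sum_pos' (fun i _ => log_sub_mul_nonneg (hp.1 i) (hq.1 i))
      exact ⟨i0, Finset.mem_univ i0, log_sub_mul_pos (hp.1 i0) (hq.1 i0) hi0⟩
    linarith
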